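/- For 1 ≤ k ≤ e-1, an element w ∈ G(e,e,n) divides λ^k (i.e., w ≼ λ^k) if and only if every nonzero entry of w lying weakly below-right of the 'bullet path' (i.e., every nonzero entry w[i,c] that is not a bullet) is equal to 1 or ζ_e^k; here a bullet is a nonzero entry w[i,c] such that all entries w[i',c'] with i' ≤ i, c' ≤ c and (i',c') ≠ (i,c) are zero. -/

import Mathlib

open Matrix Complex
open scoped Classical

/-- `ζ_e = exp(2πi/e)`. -/
noncomputable def zeta (e : ℕ) : ℂ := Complex.exp (2 * Real.pi * Complex.I / e)

/-- The generator `t_i` of `G(e,e,n)`: the monomial matrix with upper-left `2×2` block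
`[[0, ζ_e^{-i}],[ζ_e^i, 0]]` and identity elsewhere. -/
noncomputable def tmat (e n : ℕ) (i : ℤ) : Matrix (Fin n) (Fin n) ℂ :=
  Matrix.of fun a b =>
    if (a : ℕ) = 0 ∧ (b : ℕ) = 1 then zeta e ^ (-i)
    else if (a : ℕ) = 1 ∧ (b : ℕ) = 0 then zeta e ^ i
    else if a = b ∧ 2 ≤ (a : ℕ) then 1 else 0

/-- The generator `s_j` of `G(e,e,n)`: the permutation matrix of the transposition
exchanging coordinates `j-1` and `j` (1-indexed), i.e. indices `j-2` and `j-1` (0-indexed). -/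
def smat (n : ℕ) (j : ℕ) : Matrix (Fin n) (Fin n) ℂ :=
  Matrix.of fun a b =>
    if (a : ℕ) = j - 2 ∧ (b : ℕ) = j - 1 then 1
    else if (a : ℕ) = j - 1 ∧ (b : ℕ) = j - 2 then 1
    else if a = b ∧ (a : ℕ) ≠ j - 2 ∧ (a : ℕ) ≠ j - 1 then 1 else 0

/-- The generating set `X = {t_0, …, t_{e-1}, s_3, …, s_n}` of `G(e,e,n)`. -/
noncomputable def Xset (e n : ℕ) : Set (Matrix (Fin n) (Fin n) ℂ) :=
  {w | (∃ i : ℕ, i < e ∧ w = tmat e n i) ∨ (∃ j : ℕ, 3 ≤ j ∧ j ≤ n ∧ w = smat n j)}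

/-- Membership in `G(e,e,n)`: `w` is monomial, its nonzero entries are `e`-th roots of
unity, and the product of its nonzero entries is `1`. -/
def IsGeen (e n : ℕ) (w : Matrix (Fin n) (Fin n) ℂ) : Prop :=
  (∀ i, ∃! j, w i j ≠ 0) ∧ (∀ j, ∃! i, w i j ≠ 0) ∧
  (∀ i j, w i j ≠ 0 → w i j ^ e = 1) ∧
  (∏ i, ∏ j, (if w i j ≠ 0 then w i j else 1)) = 1

/-- The length `ℓ(w)` of `w` over the generating set `X` (all generators are
involutions, so positive words suffice). -/
noncomputable def len (e n : ℕ) (w : Matrix (Fin n) (Fin n) ℂ) : ℕ :=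
  sInf {r | ∃ l : List (Matrix (Fin n) (Fin n) ℂ),
    (∀ x ∈ l, x ∈ Xset e n) ∧ l.length = r ∧ l.prod = w}

/-- Left divisibility: `w' ≼ w` iff `w = w' w''` with `w'' ∈ G(e,e,n)` and
`ℓ(w) = ℓ(w') + ℓ(w'')`. -/
noncomputable def ldvd (e n : ℕ) (w' w : Matrix (Fin n) (Fin n) ℂ) : Prop :=
  ∃ w'', IsGeen e n w'' ∧ w = w' * w'' ∧ len e n w = len e n w' + len e n w''

/-- Right divisibility: `w' ≼_r w` iff `w = w'' w'` with `w'' ∈ G(e,e,n)` and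
`ℓ(w) = ℓ(w'') + ℓ(w')`. -/
noncomputable def rdvd (e n : ℕ) (w' w : Matrix (Fin n) (Fin n) ℂ) : Prop :=
  ∃ w'', IsGeen e n w'' ∧ w = w'' * w' ∧ len e n w = len e n w'' + len e n w'

/-- The element `λ = diag(ζ_e^{-(n-1)}, ζ_e, …, ζ_e)`. -/
noncomputable def lam (e n : ℕ) : Matrix (Fin n) (Fin n) ℂ :=
  Matrix.diagonal (fun i => if (i : ℕ) = 0 then zeta e ^ (-(n - 1 : ℤ)) else zeta e)

/-- A nonzero entry `w[i,c]` is a bullet if every entry weakly above and to its left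
(other than itself) is zero. -/
def IsBullet (n : ℕ) (w : Matrix (Fin n) (Fin n) ℂ) (i c : Fin n) : Prop :=
  w i c ≠ 0 ∧ ∀ i' c' : Fin n, i' ≤ i → c' ≤ c → (i', c') ≠ (i, c) → w i' c' = 0

/-!
Write `w ∈ G(e,e,n)` as the monomial matrix with entry `z i` in position `(i, σ i)`. Its length
over `X` is `∑ i, #(above-right of (i, σ i)) + 2 * ∑ (z i ≠ 1), #(above-left of (i, σ i))`:
right multiplication by a generator swaps two adjacent columns and changes this number by
exactly `±1`, and every `w ≠ 1` has a generator decreasing it. For `λ^k = diag d` the cofactor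
`w⁻¹ λ^k` has weight `d i / z i` in row `σ i`. As `σ` and `σ⁻¹` have the same number of
inversions and above-left counts are invariant under transposition,
`ℓ(w) + ℓ(w⁻¹ λ^k) - ℓ(λ^k) = 2 * ∑ i, #(above-left of i) * ([z i ≠ 1] + [d i ≠ z i] - 1)`.
Every summand is `≥ 0` because `d i = ζ_e^k ≠ 1` for `i ≠ 0`, so `w ≼ λ^k` iff every
non-bullet entry is `1` or `ζ_e^k`.
-/

namespace Geen

open Finset Equiv

variable {n e : ℕ}

def monomialMatrix (σ : Perm (Fin n)) (z : Fin n → ℂ) : Matrix (Fin n) (Fin n) ℂ :=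
  Matrix.of fun i c => if c = σ i then z i else 0

structure IsDiagPart (e : ℕ) (z : Fin n → ℂ) : Prop where
  ne_zero : ∀ i, z i ≠ 0
  pow_eq_one : ∀ i, z i ^ e = 1
  prod_eq_one : ∏ i, z i = 1

namespace IsDiagPart

variable {z u : Fin n → ℂ}

lemma mul (hz : IsDiagPart e z) (hu : IsDiagPart e u) : IsDiagPart e (z * u) where
  ne_zero i := mul_ne_zero (hz.ne_zero i) (hu.ne_zero i)
  pow_eq_one i := by simp [mul_pow, hz.pow_eq_one, hu.pow_eq_one]
  prod_eq_one := by simp [prod_mul_distrib, hz.prod_eq_one, hu.prod_eq_one]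

lemma inv (hz : IsDiagPart e z) : IsDiagPart e z⁻¹ where
  ne_zero i := inv_ne_zero (hz.ne_zero i)
  pow_eq_one i := by simp [inv_pow, hz.pow_eq_one]
  prod_eq_one := by simp [prod_inv_distrib, hz.prod_eq_one]

lemma pow (hz : IsDiagPart e z) (k : ℕ) : IsDiagPart e (z ^ k) where
  ne_zero i := pow_ne_zero k (hz.ne_zero i)
  pow_eq_one i := by rw [Pi.pow_apply, ← pow_mul, mul_comm, pow_mul, hz.pow_eq_one, one_pow]
  prod_eq_one := by simp [prod_pow, hz.prod_eq_one]

lemma comp (hz : IsDiagPart e z) (σ : Perm (Fin n)) : IsDiagPart e (z ∘ σ) where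
  ne_zero i := hz.ne_zero (σ i)
  pow_eq_one i := hz.pow_eq_one (σ i)
  prod_eq_one := by simp [σ.prod_comp, hz.prod_eq_one]

end IsDiagPart

lemma monomialMatrix_ne_zero_iff {σ : Perm (Fin n)} {z : Fin n → ℂ} (hz : ∀ i, z i ≠ 0)
    (i c : Fin n) : monomialMatrix σ z i c ≠ 0 ↔ c = σ i := by
  by_cases h : c = σ i <;> simp [monomialMatrix, h, hz i]

lemma monomialMatrix_mul (σ τ : Perm (Fin n)) (z u : Fin n → ℂ) :
    monomialMatrix σ z * monomialMatrix τ u = monomialMatrix (σ.trans τ) (z * u ∘ σ) := by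
  ext i c
  rw [Matrix.mul_apply, sum_eq_single (σ i) (fun j _ hj => by simp [monomialMatrix, hj])
    (by simp)]
  by_cases hc : c = τ (σ i) <;> simp [monomialMatrix, hc]

lemma monomialMatrix_one_eq_diagonal (d : Fin n → ℂ) :
    monomialMatrix 1 d = Matrix.diagonal d := by
  ext i c
  simp [monomialMatrix, Matrix.diagonal_apply, eq_comm]

lemma monomialMatrix_one : monomialMatrix (1 : Perm (Fin n)) 1 = 1 := by
  rw [monomialMatrix_one_eq_diagonal]
  exact Matrix.diagonal_one

lemma monomialMatrix_injective {σ τ : Perm (Fin n)} {z y : Fin n → ℂ} (hz : ∀ i, z i ≠ 0)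
    (h : monomialMatrix σ z = monomialMatrix τ y) : σ = τ ∧ z = y := by
  have key i : σ i = τ i ∧ z i = y i := by
    have hi : z i = if σ i = τ i then y i else 0 := by
      simpa [monomialMatrix] using congrFun (congrFun h i) (σ i)
    by_cases hc : σ i = τ i
    · exact ⟨hc, hi.trans (if_pos hc)⟩
    · exact absurd (hi.trans (if_neg hc)) (hz i)
  exact ⟨Equiv.ext fun i => (key i).1, funext fun i => (key i).2⟩

lemma isGeen_monomialMatrix {σ : Perm (Fin n)} {z : Fin n → ℂ} (hz : IsDiagPart e z) :
    IsGeen e n (monomialMatrix σ z) := by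
  have hne := monomialMatrix_ne_zero_iff (σ := σ) hz.ne_zero
  refine ⟨fun i => ⟨σ i, (hne i _).2 rfl, fun c hc => (hne i c).1 hc⟩,
    fun c => ⟨σ.symm c, (hne _ c).2 (σ.apply_symm_apply c).symm,
      fun i hi => σ.eq_symm_apply.2 ((hne i c).1 hi).symm⟩, fun i c h => ?_, ?_⟩
  · simpa [(hne i c).1 h, monomialMatrix] using hz.pow_eq_one i
  · calc ∏ i, ∏ c, (if monomialMatrix σ z i c ≠ 0 then monomialMatrix σ z i c else 1)
        = ∏ i, z i := prod_congr rfl fun i _ => by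
          rw [prod_eq_single (σ i) (fun c _ hc => if_neg fun h => hc ((hne i c).1 h))
            (by simp), if_pos ((hne i _).2 rfl)]
          simp [monomialMatrix]
      _ = 1 := hz.prod_eq_one

lemma _root_.IsGeen.exists_eq_monomialMatrix {w : Matrix (Fin n) (Fin n) ℂ} (hw : IsGeen e n w) :
    ∃ σ z, IsDiagPart e z ∧ w = monomialMatrix σ z := by
  obtain ⟨hrow, hcol, hpow, hprod⟩ := hw
  choose f hf hf' using hrow
  have hinj : Function.Injective f := fun i₁ i₂ h =>
    (hcol (f i₁)).unique (hf i₁) (h ▸ hf i₂)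
  let σ : Perm (Fin n) := ofBijective f (Finite.injective_iff_bijective.1 hinj)
  have hw : w = monomialMatrix σ fun i => w i (f i) := by
    ext i c
    by_cases hc : c = f i
    · simp [monomialMatrix, σ, hc]
    · simpa [monomialMatrix, σ, hc] using not_imp_comm.1 (hf' i c) hc
  refine ⟨σ, _, ⟨hf, fun i => hpow i _ (hf i), ?_⟩, hw⟩
  rw [← hprod]
  refine prod_congr rfl fun i _ => ?_
  rw [prod_eq_single (f i) (fun c _ hc => if_neg fun h => hc (hf' i c h)) (by simp),
    if_pos (hf i)]

section aboveLeft

variable (σ : Perm (Fin n))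

noncomputable def aboveLeft (i : Fin n) : Finset (Fin n) := (Iio i).filter fun j => σ j < σ i

noncomputable def aboveRight (i : Fin n) : Finset (Fin n) := (Iio i).filter fun j => σ i < σ j

noncomputable def rowLength (z : Fin n → ℂ) (i : Fin n) : ℕ :=
  #(aboveRight σ i) + if z i = 1 then 0 else 2 * #(aboveLeft σ i)

noncomputable def lengthFormula (z : Fin n → ℂ) : ℕ := ∑ i, rowLength σ z i

lemma card_aboveLeft_add_card_aboveRight (i : Fin n) :
    #(aboveLeft σ i) + #(aboveRight σ i) = i := by
  rw [← Fin.card_Iio i, aboveLeft, aboveRight, ← card_filter_add_card_filter_not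
    (s := Iio i) (fun j => σ j < σ i)]
  congr 2
  refine filter_congr fun j hj => ?_
  rw [not_lt, le_iff_lt_or_eq, or_iff_left (σ.injective.ne (mem_Iio.1 hj).ne')]

lemma aboveLeft_eq_empty_of_val_eq_zero {i : Fin n} (hi : (i : ℕ) = 0) :
    aboveLeft σ i = ∅ :=
  filter_eq_empty_iff.2 fun j hj => absurd (mem_Iio.1 hj) (by rw [Fin.lt_def]; omega)

lemma aboveLeft_eq_empty_of_apply_val_eq_zero {i : Fin n} (hi : (σ i : ℕ) = 0) :
    aboveLeft σ i = ∅ :=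
  filter_eq_empty_iff.2 fun j _ h => by rw [Fin.lt_def] at h; omega

lemma aboveRight_one (i : Fin n) : aboveRight 1 i = ∅ :=
  filter_eq_empty_iff.2 fun _ hj h => lt_asymm (mem_Iio.1 hj) h

lemma lengthFormula_one_one : lengthFormula (1 : Perm (Fin n)) 1 = 0 :=
  sum_eq_zero fun i _ => by simp [rowLength, aboveRight_one]

lemma card_aboveLeft_symm (i : Fin n) : #(aboveLeft σ.symm (σ i)) = #(aboveLeft σ i) :=
  card_nbij' σ.symm σ (fun j hj => by simpa [aboveLeft, and_comm] using hj)
    (fun j hj => by simpa [aboveLeft, and_comm] using hj) (fun j _ => by simp) (fun j _ => by simp)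

lemma sum_card_aboveRight_symm : ∑ c, #(aboveRight σ.symm c) = ∑ i, #(aboveRight σ i) := by
  have hL : ∑ c, #(aboveLeft σ.symm c) = ∑ i, #(aboveLeft σ i) := by
    rw [← Equiv.sum_comp σ]
    exact sum_congr rfl fun i _ => card_aboveLeft_symm σ i
  have hval : ∑ c : Fin n, (c : ℕ) = ∑ i : Fin n, (σ i : ℕ) := (Equiv.sum_comp σ _).symm
  have h1 := sum_congr rfl fun c (_ : c ∈ univ) => card_aboveLeft_add_card_aboveRight σ.symm c
  have h2 := sum_congr rfl fun i (_ : i ∈ univ) => card_aboveLeft_add_card_aboveRight σ i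
  rw [sum_add_distrib] at h1 h2
  omega

end aboveLeft

section adjacentSwap

variable {a b : Fin n}

lemma swap_apply_lt_iff (hab : (a : ℕ) + 1 = b) {x y : Fin n} (hb : y ≠ b) :
    swap a b x < y ↔ x < y := by
  simp only [swap_apply_def]
  split_ifs <;> simp only [Fin.lt_def, Ne, Fin.ext_iff] at * <;> omega

lemma lt_swap_apply_iff (hab : (a : ℕ) + 1 = b) {x y : Fin n} (ha : y ≠ a) :
    y < swap a b x ↔ y < x := by
  simp only [swap_apply_def]
  split_ifs <;> simp only [Fin.lt_def, Ne, Fin.ext_iff] at * <;> omega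

lemma swap_apply_lt_right_iff (hab : (a : ℕ) + 1 = b) (x : Fin n) :
    swap a b x < b ↔ x < a ∨ x = b := by
  simp only [swap_apply_def]
  split_ifs <;> simp only [Fin.lt_def, Fin.ext_iff] at * <;> omega

lemma aboveLeft_trans_swap_of_ne (hab : (a : ℕ) + 1 = b) (σ : Perm (Fin n)) {i : Fin n}
    (ha : σ i ≠ a) (hb : σ i ≠ b) :
    aboveLeft (σ.trans (swap a b)) i = aboveLeft σ i :=
  filter_congr fun j _ => by
    rw [trans_apply, trans_apply, swap_apply_of_ne_of_ne ha hb, swap_apply_lt_iff hab hb]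

lemma aboveRight_trans_swap_of_ne (hab : (a : ℕ) + 1 = b) (σ : Perm (Fin n)) {i : Fin n}
    (ha : σ i ≠ a) (hb : σ i ≠ b) :
    aboveRight (σ.trans (swap a b)) i = aboveRight σ i :=
  filter_congr fun j _ => by
    rw [trans_apply, trans_apply, swap_apply_of_ne_of_ne ha hb, lt_swap_apply_iff hab ha]

lemma card_aboveLeft_trans_swap_symm_left (hab : (a : ℕ) + 1 = b) (σ : Perm (Fin n)) :
    #(aboveLeft (σ.trans (swap a b)) (σ.symm a)) =
      #(aboveLeft σ (σ.symm a)) + if σ.symm b < σ.symm a then 1 else 0 := by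
  have hunion : aboveLeft (σ.trans (swap a b)) (σ.symm a) =
      aboveLeft σ (σ.symm a) ∪ (Iio (σ.symm a)).filter (· = σ.symm b) := by
    ext j
    simp only [aboveLeft, mem_union, mem_filter, trans_apply, apply_symm_apply, swap_apply_left,
      swap_apply_lt_right_iff hab, ← eq_symm_apply]
    tauto
  have hdisj : Disjoint (aboveLeft σ (σ.symm a)) ((Iio (σ.symm a)).filter (· = σ.symm b)) := by
    refine disjoint_filter_filter' _ _ fun p hlt heq j hj => ?_
    have := (heq j hj).symm ▸ hlt j hj
    simp only [apply_symm_apply, Fin.lt_def] at this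
    omega
  rw [hunion, card_union_of_disjoint hdisj, filter_eq']
  split_ifs <;> simp_all

lemma card_aboveLeft_trans_swap_symm_right (hab : (a : ℕ) + 1 = b) (σ : Perm (Fin n)) :
    #(aboveLeft (σ.trans (swap a b)) (σ.symm b)) + (if σ.symm a < σ.symm b then 1 else 0) =
      #(aboveLeft σ (σ.symm b)) := by
  have h := card_aboveLeft_trans_swap_symm_left hab (σ.trans (swap a b))
  simp only [trans_assoc, swap_swap, trans_refl, symm_trans_apply, symm_swap, swap_apply_left,
    swap_apply_right] at h
  exact h.symm

end adjacentSwap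

noncomputable def swapWeight (a b : Fin n) (x : ℂ) : Fin n → ℂ :=
  fun c => if c = a then x else if c = b then x⁻¹ else 1

lemma swapWeight_of_ne {a b c : Fin n} (x : ℂ) (ha : c ≠ a) (hb : c ≠ b) :
    swapWeight a b x c = 1 := by
  simp [swapWeight, ha, hb]

lemma swapWeight_left (a b : Fin n) (x : ℂ) : swapWeight a b x a = x := by
  simp [swapWeight]

lemma swapWeight_right {a b : Fin n} (hab : a ≠ b) (x : ℂ) : swapWeight a b x b = x⁻¹ := by
  simp [swapWeight, hab.symm]

lemma swapWeight_ne_zero (a b : Fin n) {x : ℂ} (hx : x ≠ 0) (c : Fin n) :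
    swapWeight a b x c ≠ 0 := by
  unfold swapWeight
  split_ifs <;> simp [hx]

lemma lengthFormula_eq_add_of_eq_off {σ σ' : Perm (Fin n)} {z z' : Fin n → ℂ} {r s : Fin n}
    (hrs : r ≠ s) (h : ∀ i, i ≠ r → i ≠ s → rowLength σ' z' i = rowLength σ z i) :
    (lengthFormula σ' z' : ℤ) = lengthFormula σ z +
      (((rowLength σ' z' r : ℤ) - rowLength σ z r) +
        ((rowLength σ' z' s : ℤ) - rowLength σ z s)) := by
  have hsum := Fintype.sum_eq_add r s hrs (f := fun i => (rowLength σ' z' i : ℤ) - rowLength σ z i)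
    fun i hi => by simp [h i hi.1 hi.2]
  rw [sum_sub_distrib] at hsum
  simp only [lengthFormula, Nat.cast_sum]
  linarith

lemma rowLength_trans_swap_of_ne {a b : Fin n} (hab : (a : ℕ) + 1 = b) (x : ℂ)
    (σ : Perm (Fin n)) (z : Fin n → ℂ) {i : Fin n} (ha : σ i ≠ a) (hb : σ i ≠ b) :
    rowLength (σ.trans (swap a b)) (z * swapWeight a b x ∘ σ) i = rowLength σ z i := by
  simp [rowLength, aboveLeft_trans_swap_of_ne hab σ ha hb,
    aboveRight_trans_swap_of_ne hab σ ha hb, swapWeight_of_ne x ha hb]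

lemma lengthFormula_trans_swap {a b : Fin n} (hab : (a : ℕ) + 1 = b) {x : ℂ}
    (hax : (a : ℕ) = 0 ∨ x = 1) (σ : Perm (Fin n)) (z : Fin n → ℂ) :
    (lengthFormula (σ.trans (swap a b)) (z * swapWeight a b x ∘ σ) : ℤ) =
      lengthFormula σ z +
        if σ.symm a < σ.symm b then (if z (σ.symm b) = 1 then 1 else -1)
        else (if z (σ.symm a) * x = 1 then -1 else 1) := by
  have hne : a ≠ b := fun h => by simp [h] at hab
  rw [lengthFormula_eq_add_of_eq_off (σ.symm.injective.ne hne) fun i hia hib =>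
    rowLength_trans_swap_of_ne hab x σ z (fun h => hia (σ.eq_symm_apply.2 h))
      fun h => hib (σ.eq_symm_apply.2 h)]
  simp only [rowLength, Pi.mul_apply, Function.comp_apply, apply_symm_apply, swapWeight_left,
    swapWeight_right hne]
  set σ' := σ.trans (swap a b)
  set ra := σ.symm a
  set rb := σ.symm b
  have L1 : #(aboveLeft σ' ra) = #(aboveLeft σ ra) + if rb < ra then 1 else 0 :=
    card_aboveLeft_trans_swap_symm_left hab σ
  have L2 : #(aboveLeft σ' rb) + (if ra < rb then 1 else 0) = #(aboveLeft σ rb) :=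
    card_aboveLeft_trans_swap_symm_right hab σ
  have R1 := card_aboveLeft_add_card_aboveRight σ ra
  have R2 := card_aboveLeft_add_card_aboveRight σ rb
  have R3 := card_aboveLeft_add_card_aboveRight σ' ra
  have R4 := card_aboveLeft_add_card_aboveRight σ' rb
  have hrab : ra ≠ rb := σ.symm.injective.ne hne
  rcases hax with ha0 | rfl
  · have E1 : #(aboveLeft σ ra) = 0 := by
      rw [aboveLeft_eq_empty_of_apply_val_eq_zero σ (by simp [ra, ha0]), card_empty]
    have E2 : #(aboveLeft σ' rb) = 0 := by
      rw [aboveLeft_eq_empty_of_apply_val_eq_zero σ' (by simp [σ', rb, ha0]), card_empty]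
    rcases lt_or_gt_of_ne hrab with h | h <;>
      simp only [h, lt_asymm h, if_true, if_false] at L1 L2 ⊢ <;> split_ifs <;> push_cast <;> omega
  · simp only [mul_one, inv_one]
    rcases lt_or_gt_of_ne hrab with h | h <;>
      simp only [h, lt_asymm h, if_true, if_false] at L1 L2 ⊢ <;> split_ifs <;> push_cast <;> omega

lemma lengthFormula_trans_swap_le {a b : Fin n} (hab : (a : ℕ) + 1 = b) {x : ℂ}
    (hax : (a : ℕ) = 0 ∨ x = 1) (σ : Perm (Fin n)) (z : Fin n → ℂ) :
    lengthFormula (σ.trans (swap a b)) (z * swapWeight a b x ∘ σ) ≤ lengthFormula σ z + 1 := by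
  have h := lengthFormula_trans_swap hab hax σ z
  split_ifs at h <;> omega

def IsDescent (σ : Perm (Fin n)) (z : Fin n → ℂ) (a b : Fin n) (x : ℂ) : Prop :=
  (σ.symm a < σ.symm b ∧ z (σ.symm b) ≠ 1) ∨ (σ.symm b < σ.symm a ∧ z (σ.symm a) * x = 1)

lemma lengthFormula_trans_swap_add_one {a b : Fin n} (hab : (a : ℕ) + 1 = b) {x : ℂ}
    (hax : (a : ℕ) = 0 ∨ x = 1) {σ : Perm (Fin n)} {z : Fin n → ℂ}
    (hdesc : IsDescent σ z a b x) :
    lengthFormula (σ.trans (swap a b)) (z * swapWeight a b x ∘ σ) + 1 = lengthFormula σ z := by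
  have h := lengthFormula_trans_swap hab hax σ z
  rcases hdesc with ⟨hlt, hz⟩ | ⟨hlt, hz⟩
  · simp only [hlt, hz, if_true, if_false] at h
    omega
  · simp only [lt_asymm hlt, hz, if_true, if_false] at h
    omega

lemma isDiagPart_swapWeight {a b : Fin n} (hab : a ≠ b) {x : ℂ} (hx : x ≠ 0) (hxe : x ^ e = 1) :
    IsDiagPart e (swapWeight a b x) where
  ne_zero := swapWeight_ne_zero a b hx
  pow_eq_one c := by unfold swapWeight; split_ifs <;> simp [hxe]
  prod_eq_one := by
    rw [Fintype.prod_eq_mul a b hab fun c hc => swapWeight_of_ne x hc.1 hc.2, swapWeight_left,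
      swapWeight_right hab, mul_inv_cancel₀ hx]

noncomputable def gen (a b : Fin n) (x : ℂ) : Matrix (Fin n) (Fin n) ℂ :=
  monomialMatrix (swap a b) (swapWeight a b x)

lemma gen_mul_self {a b : Fin n} (hab : a ≠ b) {x : ℂ} (hx : x ≠ 0) :
    gen a b x * gen a b x = 1 := by
  have hw : swapWeight a b x * swapWeight a b x ∘ swap a b = 1 := by
    ext c
    rcases eq_or_ne c a with rfl | hca
    · simp [swapWeight_left, swapWeight_right hab, hx]
    rcases eq_or_ne c b with rfl | hcb
    · simp [swapWeight_left, swapWeight_right hab, hx]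
    · simp [swap_apply_of_ne_of_ne hca hcb, swapWeight_of_ne x hca hcb]
  rw [gen, monomialMatrix_mul, swap_swap, hw]
  exact monomialMatrix_one

lemma tmat_eq {a b : Fin n} (ha : (a : ℕ) = 0) (hb : (b : ℕ) = 1) (i : ℤ) :
    tmat e n i = gen a b (zeta e ^ (-i)) := by
  ext r c
  simp only [tmat, gen, monomialMatrix, swapWeight, swap_apply_def, Matrix.of_apply, Fin.ext_iff,
    ha, hb, _root_.zpow_neg, inv_inv]
  split_ifs <;> first | rfl | omega

lemma smat_eq {a b : Fin n} {j : ℕ} (ha : (a : ℕ) + 2 = j) (hb : (b : ℕ) + 1 = j) :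
    smat n j = gen a b 1 := by
  ext r c
  simp only [smat, gen, monomialMatrix, swapWeight, swap_apply_def, Matrix.of_apply, Fin.ext_iff,
    inv_one]
  split_ifs <;> first | rfl | omega

lemma zeta_ne_zero (e : ℕ) : zeta e ≠ 0 := Complex.exp_ne_zero _

lemma isPrimitiveRoot_zeta (he : e ≠ 0) : IsPrimitiveRoot (zeta e) e :=
  Complex.isPrimitiveRoot_exp e he

lemma zeta_zpow_pow_eq_one (he : e ≠ 0) (m : ℤ) : (zeta e ^ m) ^ e = 1 := by
  rw [← zpow_natCast, ← _root_.zpow_mul, mul_comm, _root_.zpow_mul, zpow_natCast,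
    (isPrimitiveRoot_zeta he).pow_eq_one, _root_.one_zpow]

lemma exists_gen_of_mem_Xset (hn : 2 ≤ n) {g : Matrix (Fin n) (Fin n) ℂ} (hg : g ∈ Xset e n) :
    ∃ a b : Fin n, ∃ x : ℂ, (a : ℕ) + 1 = b ∧ ((a : ℕ) = 0 ∨ x = 1) ∧ x ≠ 0 ∧ g = gen a b x := by
  rcases hg with ⟨i, -, rfl⟩ | ⟨j, hj3, hjn, rfl⟩
  · exact ⟨⟨0, by omega⟩, ⟨1, by omega⟩, _, rfl, Or.inl rfl, zpow_ne_zero _ (zeta_ne_zero e),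
      tmat_eq rfl rfl _⟩
  · exact ⟨⟨j - 2, by omega⟩, ⟨j - 1, by omega⟩, 1, by simp; omega, Or.inr rfl, one_ne_zero,
      smat_eq (by simp; omega) (by simp; omega)⟩

lemma gen_one_mem_Xset (he : e ≠ 0) {a b : Fin n} (hab : (a : ℕ) + 1 = b) :
    gen a b 1 ∈ Xset e n := by
  by_cases ha : (a : ℕ) = 0
  · exact Or.inl ⟨0, Nat.pos_of_ne_zero he,
      by simpa using (tmat_eq (b := b) ha (by omega) 0).symm⟩
  · exact Or.inr ⟨a + 2, by omega, by have := b.isLt; omega, (smat_eq rfl (by omega)).symm⟩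

lemma exists_monomialMatrix_eq_prod (hn : 2 ≤ n) (l : List (Matrix (Fin n) (Fin n) ℂ))
    (hl : ∀ g ∈ l, g ∈ Xset e n) :
    ∃ σ z, (∀ i, z i ≠ 0) ∧ l.prod = monomialMatrix σ z ∧ lengthFormula σ z ≤ l.length := by
  induction l using List.reverseRecOn with
  | nil => exact ⟨1, 1, fun _ => one_ne_zero, monomialMatrix_one.symm, lengthFormula_one_one.le⟩
  | append_singleton l g ih =>
    obtain ⟨σ, z, hz, hprod, hle⟩ := ih fun g hg => hl g (List.mem_append_left _ hg)
    obtain ⟨a, b, x, hab, hax, hx, rfl⟩ := exists_gen_of_mem_Xset hn (hl g (by simp))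
    refine ⟨σ.trans (swap a b), z * swapWeight a b x ∘ σ, fun i => ?_, ?_, ?_⟩
    · exact mul_ne_zero (hz i) (swapWeight_ne_zero a b hx _)
    · rw [List.prod_append, List.prod_singleton, hprod, gen, monomialMatrix_mul]
    · have := lengthFormula_trans_swap_le hab hax σ z
      rw [List.length_append, List.length_singleton]
      omega

lemma eq_one_of_forall_not_descent (hn : 2 ≤ n) {σ : Perm (Fin n)} {z : Fin n → ℂ}
    (hprod : ∏ i, z i = 1) (h01 : σ.symm ⟨0, by omega⟩ < σ.symm ⟨1, by omega⟩)
    (hnd : ∀ a b : Fin n, (a : ℕ) + 1 = b → ¬IsDescent σ z a b 1) :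
    σ = 1 ∧ z = 1 := by
  have hz_of_lt (a b : Fin n) (hab : (a : ℕ) + 1 = b) (h : σ.symm a < σ.symm b) :
      z (σ.symm b) = 1 :=
    not_not.1 fun hz => hnd a b hab (Or.inl ⟨h, hz⟩)
  have hlt_of_z (a b : Fin n) (hab : (a : ℕ) + 1 = b) (hz : z (σ.symm a) = 1) :
      σ.symm a < σ.symm b :=
    (lt_or_gt_of_ne (σ.symm.injective.ne fun h => by simp [h] at hab)).resolve_right
      fun h => hnd a b hab (Or.inr ⟨h, by rw [mul_one, hz]⟩)
  have chain : ∀ k (hk : k + 1 < n),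
      σ.symm ⟨k, by omega⟩ < σ.symm ⟨k + 1, hk⟩ ∧ z (σ.symm ⟨k + 1, hk⟩) = 1 := by
    intro k
    induction k with
    | zero => exact fun _ => ⟨h01, hz_of_lt _ _ rfl h01⟩
    | succ k ih =>
      intro hk
      have hlt := hlt_of_z ⟨k + 1, by omega⟩ ⟨k + 2, hk⟩ rfl (ih (by omega)).2
      exact ⟨hlt, hz_of_lt _ _ rfl hlt⟩
  obtain ⟨m, rfl⟩ : ∃ m, n = m + 1 := ⟨n - 1, by omega⟩
  have hid : ⇑σ.symm = id :=
    (Fin.strictMono_iff_lt_succ.2 fun i => (chain i (by have := i.isLt; omega)).1).eq_id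
  have hz (i : Fin (m + 1)) (hi : (i : ℕ) ≠ 0) : z i = 1 := by
    obtain ⟨k, hk⟩ := Nat.exists_eq_succ_of_ne_zero hi
    have h := (chain k (by omega)).2
    rwa [hid, id, show (⟨k + 1, _⟩ : Fin (m + 1)) = i from Fin.ext hk.symm] at h
  refine ⟨Equiv.ext fun i => by simpa using (congrFun hid (σ i)).symm, funext fun i => ?_⟩
  by_cases hi : (i : ℕ) = 0
  · rwa [Fintype.prod_eq_single i fun j hj => hz j fun h => hj (Fin.ext (h.trans hi.symm))]
      at hprod
  · exact hz i hi

lemma exists_descent (he : e ≠ 0) (hn : 2 ≤ n) {σ : Perm (Fin n)} {z : Fin n → ℂ}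
    (hz : IsDiagPart e z) (hne : ¬(σ = 1 ∧ z = 1)) :
    ∃ a b : Fin n, ∃ x : ℂ, gen a b x ∈ Xset e n ∧ (a : ℕ) + 1 = b ∧ ((a : ℕ) = 0 ∨ x = 1) ∧
      x ^ e = 1 ∧
      lengthFormula (σ.trans (swap a b)) (z * swapWeight a b x ∘ σ) + 1 = lengthFormula σ z := by
  have : NeZero e := ⟨he⟩
  set a₀ : Fin n := ⟨0, by omega⟩
  set a₁ : Fin n := ⟨1, by omega⟩
  by_cases h10 : σ.symm a₁ < σ.symm a₀
  · obtain ⟨i, hie, hi⟩ :=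
      (isPrimitiveRoot_zeta he).eq_pow_of_pow_eq_one (hz.pow_eq_one (σ.symm a₀))
    refine ⟨a₀, a₁, zeta e ^ (-(i : ℤ)), Or.inl ⟨i, hie, (tmat_eq rfl rfl _).symm⟩, rfl,
      Or.inl rfl, zeta_zpow_pow_eq_one he _, lengthFormula_trans_swap_add_one rfl (Or.inl rfl)
        (Or.inr ⟨h10, ?_⟩)⟩
    rw [← hi, _root_.zpow_neg, zpow_natCast, mul_inv_cancel₀ (pow_ne_zero _ (zeta_ne_zero e))]
  by_cases hdesc : ∃ a b : Fin n, (a : ℕ) + 1 = b ∧ IsDescent σ z a b 1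
  · obtain ⟨a, b, hab, hd⟩ := hdesc
    exact ⟨a, b, 1, gen_one_mem_Xset he hab, hab, Or.inr rfl, one_pow e,
      lengthFormula_trans_swap_add_one hab (Or.inr rfl) hd⟩
  · have h01 : σ.symm a₀ < σ.symm a₁ :=
      (lt_or_gt_of_ne (σ.symm.injective.ne (by simp [a₀, a₁, Fin.ext_iff]))).resolve_right h10
    exact absurd (eq_one_of_forall_not_descent hn hz.prod_eq_one h01
      fun a b hab hd => hdesc ⟨a, b, hab, hd⟩) hne

lemma exists_word_length_eq_lengthFormula (he : e ≠ 0) (hn : 2 ≤ n) {σ : Perm (Fin n)}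
    {z : Fin n → ℂ} (hz : IsDiagPart e z) :
    ∃ l : List (Matrix (Fin n) (Fin n) ℂ), (∀ g ∈ l, g ∈ Xset e n) ∧
      l.length = lengthFormula σ z ∧ l.prod = monomialMatrix σ z := by
  induction h : lengthFormula σ z using Nat.strong_induction_on generalizing σ z with
  | _ N ih =>
  by_cases h1 : σ = 1 ∧ z = 1
  · obtain ⟨rfl, rfl⟩ := h1
    exact ⟨[], by simp, by simp [← h, lengthFormula_one_one], monomialMatrix_one.symm⟩
  obtain ⟨a, b, x, hg, hab, hax, hxe, hlen⟩ := exists_descent he hn hz h1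
  have hne : a ≠ b := fun h => by simp [h] at hab
  have hx : x ≠ 0 := by rintro rfl; simp [he] at hxe
  obtain ⟨l, hl, hlen', hprod⟩ := ih _ (by omega) (σ := σ.trans (swap a b))
    (hz.mul ((isDiagPart_swapWeight hne hx hxe).comp σ)) rfl
  refine ⟨l ++ [gen a b x], fun g hgl => ?_, by simp [hlen', ← h, ← hlen], ?_⟩
  · rcases List.mem_append.1 hgl with hgl | hgl
    · exact hl g hgl
    · rwa [List.mem_singleton.1 hgl]
  · rw [List.prod_append, List.prod_singleton, hprod, gen, ← monomialMatrix_mul, ← gen,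
      mul_assoc, gen_mul_self hne hx, mul_one]

lemma len_monomialMatrix (he : e ≠ 0) (hn : 2 ≤ n) {σ : Perm (Fin n)} {z : Fin n → ℂ}
    (hz : IsDiagPart e z) : len e n (monomialMatrix σ z) = lengthFormula σ z := by
  refine IsLeast.csInf_eq ⟨exists_word_length_eq_lengthFormula he hn hz, ?_⟩
  rintro r ⟨l, hl, rfl, hprod⟩
  obtain ⟨σ', z', hz', hprod', hle⟩ := exists_monomialMatrix_eq_prod hn l hl
  obtain ⟨rfl, rfl⟩ := monomialMatrix_injective hz' (hprod'.symm.trans hprod)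
  exact hle

lemma lengthFormula_eq_sum_add_sum (σ : Perm (Fin n)) (z : Fin n → ℂ) :
    lengthFormula σ z =
      ∑ i, #(aboveRight σ i) + ∑ i, if z i = 1 then 0 else 2 * #(aboveLeft σ i) :=
  sum_add_distrib

lemma lengthFormula_symm (σ : Perm (Fin n)) (y : Fin n → ℂ) :
    lengthFormula σ.symm y =
      ∑ i, #(aboveRight σ i) + ∑ i, if y (σ i) = 1 then 0 else 2 * #(aboveLeft σ i) := by
  rw [lengthFormula_eq_sum_add_sum, sum_card_aboveRight_symm,
    ← Equiv.sum_comp σ fun c => if y c = 1 then 0 else 2 * #(aboveLeft σ.symm c)]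
  simp only [card_aboveLeft_symm]

lemma lengthFormula_one {d : Fin n → ℂ} (hd : ∀ i : Fin n, (i : ℕ) ≠ 0 → d i ≠ 1) :
    lengthFormula 1 d = ∑ i : Fin n, 2 * (i : ℕ) := by
  refine sum_congr rfl fun i _ => ?_
  rw [rowLength]
  have h := card_aboveLeft_add_card_aboveRight 1 i
  have hR : #(aboveRight 1 i) = 0 := by rw [aboveRight_one, card_empty]
  by_cases hi : (i : ℕ) = 0
  · simp [hR, aboveLeft_eq_empty_of_val_eq_zero 1 hi, hi]
  · simp only [hR, hd i hi, if_false]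
    omega

lemma lengthFormula_one_eq_add_iff {σ : Perm (Fin n)} {z y d : Fin n → ℂ}
    (hrel : ∀ i, z i * y (σ i) = d i) (hd : ∀ i : Fin n, (i : ℕ) ≠ 0 → d i ≠ 1) :
    lengthFormula 1 d = lengthFormula σ z + lengthFormula σ.symm y ↔
      ∀ i, (aboveLeft σ i).Nonempty → z i = 1 ∨ y (σ i) = 1 := by
  have hsplit : ∑ i : Fin n, 2 * (i : ℕ) =
      2 * ∑ i, #(aboveRight σ i) + ∑ i, 2 * #(aboveLeft σ i) := by
    rw [mul_sum, ← sum_add_distrib]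
    exact sum_congr rfl fun i _ => by rw [← card_aboveLeft_add_card_aboveRight σ i]; ring
  have hterm : ∀ i, 2 * #(aboveLeft σ i) ≤
        (if z i = 1 then 0 else 2 * #(aboveLeft σ i)) +
          (if y (σ i) = 1 then 0 else 2 * #(aboveLeft σ i)) ∧
      (2 * #(aboveLeft σ i) = (if z i = 1 then 0 else 2 * #(aboveLeft σ i)) +
          (if y (σ i) = 1 then 0 else 2 * #(aboveLeft σ i)) ↔
        ((aboveLeft σ i).Nonempty → z i = 1 ∨ y (σ i) = 1)) := by
    intro i
    rw [← card_pos]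
    by_cases hA : #(aboveLeft σ i) = 0
    · simp [hA]
    have hi : (i : ℕ) ≠ 0 := fun hi => hA (by rw [aboveLeft_eq_empty_of_val_eq_zero σ hi]; rfl)
    have : ¬(z i = 1 ∧ y (σ i) = 1) := fun ⟨h₁, h₂⟩ =>
      hd i hi (by rw [← hrel i, h₁, h₂, one_mul])
    split_ifs <;> simp_all
  rw [lengthFormula_one hd, lengthFormula_eq_sum_add_sum, lengthFormula_symm, hsplit,
    show ∀ R A Z Y : ℕ, 2 * R + A = R + Z + (R + Y) ↔ A = Z + Y by intros; omega,
    ← sum_add_distrib, sum_eq_sum_iff_of_le fun i _ => (hterm i).1]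
  exact forall_congr' fun i => by rw [(hterm i).2]; simp

lemma ldvd_monomialMatrix_iff (he : e ≠ 0) (hn : 2 ≤ n) {σ : Perm (Fin n)} {z d : Fin n → ℂ}
    {c : ℂ} (hz : IsDiagPart e z) (hd : IsDiagPart e d)
    (hdc : ∀ i : Fin n, (i : ℕ) ≠ 0 → d i = c) (hc : c ≠ 1) :
    ldvd e n (monomialMatrix σ z) (monomialMatrix 1 d) ↔
      ∀ i, (aboveLeft σ i).Nonempty → z i = 1 ∨ z i = c := by
  set y : Fin n → ℂ := (d * z⁻¹) ∘ σ.symm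
  have hy : IsDiagPart e y := (hd.mul hz.inv).comp σ.symm
  have hyσ i : y (σ i) = d i * (z i)⁻¹ := by simp [y]
  have hrel i : z i * y (σ i) = d i := by
    rw [hyσ, mul_comm, inv_mul_cancel_right₀ (hz.ne_zero i)]
  have hmul : monomialMatrix σ z * monomialMatrix σ.symm y = monomialMatrix 1 d := by
    rw [monomialMatrix_mul, self_trans_symm]
    exact congrArg _ (funext hrel)
  have hdvd : ldvd e n (monomialMatrix σ z) (monomialMatrix 1 d) ↔
      lengthFormula 1 d = lengthFormula σ z + lengthFormula σ.symm y := by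
    simp only [ldvd, len_monomialMatrix he hn hz, len_monomialMatrix he hn hd]
    constructor
    · rintro ⟨w, hw, heq, hlen⟩
      obtain ⟨τ, y', hy', rfl⟩ := hw.exists_eq_monomialMatrix
      obtain ⟨hτ, hdz⟩ := monomialMatrix_injective hd.ne_zero
        (heq.trans (monomialMatrix_mul σ τ z y'))
      obtain rfl : τ = σ.symm := (trans_eq_refl_iff_symm_eq.1 hτ.symm).symm
      obtain rfl : y' = y := funext fun c => by
        have h := congrFun hdz (σ.symm c)
        simp only [Pi.mul_apply, Function.comp_apply, apply_symm_apply] at h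
        simp only [y, Function.comp_apply, Pi.mul_apply, Pi.inv_apply, h, mul_comm (z _),
          mul_inv_cancel_right₀ (hz.ne_zero _)]
      rwa [len_monomialMatrix he hn hy'] at hlen
    · exact fun h =>
        ⟨_, isGeen_monomialMatrix hy, hmul.symm, by rw [len_monomialMatrix he hn hy, h]⟩
  rw [hdvd, lengthFormula_one_eq_add_iff hrel fun i hi => hdc i hi ▸ hc]
  refine forall₂_congr fun i hi => or_congr_right ?_
  rw [hyσ, mul_inv_eq_one₀ (hz.ne_zero i), hdc i, eq_comm]
  intro h0
  simp [aboveLeft_eq_empty_of_val_eq_zero σ h0] at hi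

lemma not_isBullet_monomialMatrix_iff {σ : Perm (Fin n)} {z : Fin n → ℂ} (hz : ∀ i, z i ≠ 0)
    (i : Fin n) : ¬IsBullet n (monomialMatrix σ z) i (σ i) ↔ (aboveLeft σ i).Nonempty := by
  have hne := monomialMatrix_ne_zero_iff (σ := σ) hz
  rw [← not_iff_not, not_nonempty_iff_eq_empty, not_not, IsBullet]
  constructor
  · rintro ⟨-, h⟩
    refine filter_eq_empty_iff.2 fun j hj hlt => (hne j (σ j)).2 rfl ?_
    exact h j (σ j) (mem_Iio.1 hj).le hlt.le fun h => (mem_Iio.1 hj).ne (Prod.ext_iff.1 h).1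
  · refine fun h => ⟨(hne i _).2 rfl, fun j c hj hc hjc => not_not.1 fun hjc' => ?_⟩
    obtain rfl := (hne j c).1 hjc'
    have hji : j ≠ i := fun h => hjc (by rw [h])
    exact (filter_eq_empty_iff.1 h) (mem_Iio.2 (hj.lt_of_ne hji))
      (hc.lt_of_ne (σ.injective.ne hji))

noncomputable def lamWeight (e n : ℕ) : Fin n → ℂ :=
  fun i => if (i : ℕ) = 0 then zeta e ^ (-(n - 1 : ℤ)) else zeta e

lemma lam_pow_eq (k : ℕ) : lam e n ^ k = monomialMatrix 1 (lamWeight e n ^ k) := by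
  rw [monomialMatrix_one_eq_diagonal, ← Matrix.diagonal_pow]
  rfl

lemma isDiagPart_lamWeight (he : e ≠ 0) (hn : 2 ≤ n) : IsDiagPart e (lamWeight e n) where
  ne_zero i := by unfold lamWeight; split_ifs <;> simp [zpow_ne_zero, zeta_ne_zero]
  pow_eq_one i := by
    unfold lamWeight
    split_ifs
    · exact zeta_zpow_pow_eq_one he _
    · exact (isPrimitiveRoot_zeta he).pow_eq_one
  prod_eq_one := by
    obtain ⟨m, rfl⟩ : ∃ m, n = m + 1 := ⟨n - 1, by omega⟩
    simp [Fin.prod_univ_succ, lamWeight, inv_mul_cancel₀ (pow_ne_zero _ (zeta_ne_zero e))]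

end Geen

open Geen in
/-- for `1 ≤ k ≤ e-1`, `w ≼ λ^k` iff every nonzero non-bullet entry of
`w` equals `1` or `ζ_e^k`. -/
theorem statement_12 (e n : ℕ) (hn : 2 ≤ n) (k : ℕ) (hk1 : 1 ≤ k) (hke : k ≤ e - 1)
    (w : Matrix (Fin n) (Fin n) ℂ) (hw : IsGeen e n w) :
    ldvd e n w (lam e n ^ k) ↔
      ∀ i c : Fin n, w i c ≠ 0 → ¬ IsBullet n w i c →
        (w i c = 1 ∨ w i c = zeta e ^ k) := by
  obtain ⟨σ, z, hz, rfl⟩ := hw.exists_eq_monomialMatrix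
  have he : e ≠ 0 := by omega
  have hk : zeta e ^ k ≠ 1 :=
    (isPrimitiveRoot_zeta he).pow_ne_one_of_pos_of_lt (by omega) (by omega)
  rw [lam_pow_eq, ldvd_monomialMatrix_iff he hn hz ((isDiagPart_lamWeight he hn).pow k)
    (fun i hi => by simp [lamWeight, hi]) hk]
  have hentry i : monomialMatrix σ z i (σ i) = z i := by simp [monomialMatrix]
  constructor
  · intro h i c hc hb
    obtain rfl := (monomialMatrix_ne_zero_iff hz.ne_zero i c).1 hc
    rw [hentry]
    exact h i ((not_isBullet_monomialMatrix_iff hz.ne_zero i).1 hb)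
  · intro h i hi
    simpa [hentry] using h i (σ i) ((monomialMatrix_ne_zero_iff hz.ne_zero i _).2 rfl)
      ((not_isBullet_monomialMatrix_iff hz.ne_zero i).2 hi)
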